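/- arXiv:2108.10371 — 3 statements merged into one kernel-verified Lean document; each statement's English description precedes it below -/
import Mathlib

section
/- Let V be a 2m-dimensional real vector space, J a linear complex structure on V, and Ω a symplectic form on V compatible with J (so that g(v,w) := Ω(v,Jw) is a positive definite inner product). Then for every covector ξ ∈ V*, one has (Ω^{m-1}/(m-1)!) ∧ ξ ∧ Jξ = |ξ|_g² · (Ω^m/m!), where Jξ is defined by (Jξ)(v) = -ξ(Jv). -/
open Module

/-- The wedge product of a `p`-form and a `q`-form on a real vector space,
in the determinant convention. -/
noncomputable def wedgeForm {V : Type} [AddCommGroup V] [Module ℝ V] {p q : ℕ}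
    (α : V [⋀^Fin p]→ₗ[ℝ] ℝ) (β : V [⋀^Fin q]→ₗ[ℝ] ℝ) : V [⋀^Fin (p + q)]→ₗ[ℝ] ℝ :=
  (TensorProduct.lid ℝ ℝ).toLinearMap.compAlternatingMap
    ((α.domCoprod β).domDomCongr finSumFinEquiv)

/-- The `k`-th wedge power of a `2`-form. -/
noncomputable def wpow {V : Type} [AddCommGroup V] [Module ℝ V]
    (ω : V [⋀^Fin 2]→ₗ[ℝ] ℝ) : (k : ℕ) → V [⋀^Fin (2 * k)]→ₗ[ℝ] ℝ
  | 0 => (AlternatingMap.constOfIsEmpty ℝ V (Fin 0) (1 : ℝ)).domDomCongr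
      (finCongr (by omega : (0 : ℕ) = 2 * 0))
  | (k + 1) => (wedgeForm ω (wpow ω k)).domDomCongr
      (finCongr (by omega : 2 + 2 * k = 2 * (k + 1)))

/-- A linear functional, seen as a `1`-form (alternating map on `Fin 1`). -/
noncomputable def oneForm {V : Type} [AddCommGroup V] [Module ℝ V] (ξ : V →ₗ[ℝ] ℝ) :
    V [⋀^Fin 1]→ₗ[ℝ] ℝ :=
  AlternatingMap.ofSubsingleton ℝ V ℝ (0 : Fin 1) ξ

/-!
Both sides are top-degree forms on `V`, so it suffices to compare their values on one basis.
Making `V` a complex vector space with `i` acting by `J`, and `g + i g(J ·, ·)` a hermitian inner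
product, a unitary basis `f₁, …, f_m` yields the `g`-orthonormal real basis `(fᵢ, J fᵢ)`, in which
`Ω` is the standard symplectic form. A wedge product of forms is the alternatization of the
product of its factors, so evaluating either side on this basis gives a signed sum over
permutations of the `2m` slots, in which only the permutations mapping the pairs `{fᵢ, J fᵢ}` to
pairs contribute. Counting them, `Ω^m` takes the value `m!`, and
`Ω^{m-1} ∧ ξ ∧ Jξ` the value `(m-1)! ∑ᵢ (ξ(fᵢ)² + ξ(J fᵢ)²) = (m-1)! |ξ|²_g`.
-/

open Equiv Nat

section Alternatization

variable {R M N : Type*} [CommRing R] [AddCommGroup M] [Module R M] [AddCommGroup N] [Module R N]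

theorem MultilinearMap.alternatization_domDomCongr {ι₁ ι₂ : Type*} [DecidableEq ι₁] [Fintype ι₁]
    [DecidableEq ι₂] [Fintype ι₂] (e : ι₁ ≃ ι₂) (f : MultilinearMap R (fun _ : ι₁ => M) N) :
    (f.domDomCongr e).alternatization = f.alternatization.domDomCongr e := by
  ext v
  simp only [alternatization_apply, AlternatingMap.domDomCongr_apply, domDomCongr_apply]
  refine (Fintype.sum_equiv e.permCongr _ _ fun σ => ?_).symm
  simp [Perm.sign_permCongr, Equiv.permCongr_apply]

theorem MultilinearMap.alternatization_apply_comp_symm {ι κ : Type*} [Fintype ι] [DecidableEq ι]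
    [Fintype κ] [DecidableEq κ] (f : MultilinearMap R (fun _ : ι => M) R) (e : κ ≃ ι)
    (v : κ → M) :
    f.alternatization (v ∘ e.symm) = ∑ τ : Perm κ, (Perm.sign τ : R) * f ((v ∘ τ) ∘ e.symm) := by
  rw [← AlternatingMap.domDomCongr_apply, ← alternatization_domDomCongr, alternatization_apply]
  refine Finset.sum_congr rfl fun τ _ => ?_
  rw [Units.smul_def, zsmul_eq_mul]
  rfl

end Alternatization

section TwoForms

variable {V : Type} [AddCommGroup V] [Module ℝ V]

theorem AlternatingMap.coe_alternatization_fin_two (β : V [⋀^Fin 2]→ₗ[ℝ] ℝ) :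
    MultilinearMap.alternatization (β : MultilinearMap ℝ (fun _ : Fin 2 => V) ℝ) = (2 : ℝ) • β := by
  rw [AlternatingMap.coe_alternatization, Fintype.card_fin, ← Nat.cast_smul_eq_nsmul ℝ]
  norm_num

theorem AlternatingMap.map_vecCons_swap (β : V [⋀^Fin 2]→ₗ[ℝ] ℝ) (v w : V) :
    β ![w, v] = -β ![v, w] := by
  convert β.map_swap ![v, w] (show (0 : Fin 2) ≠ 1 by decide) using 2
  ext i
  fin_cases i <;> rfl

end TwoForms

section WedgeProducts

variable {V : Type} [AddCommGroup V] [Module ℝ V]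

theorem wedgeForm_smul_left {p q : ℕ} (a : ℝ) (α : V [⋀^Fin p]→ₗ[ℝ] ℝ)
    (β : V [⋀^Fin q]→ₗ[ℝ] ℝ) : wedgeForm (a • α) β = a • wedgeForm α β := by
  simp only [wedgeForm, ← AlternatingMap.domCoprod'_apply, ← TensorProduct.smul_tmul', map_smul,
    AlternatingMap.domDomCongr_smul, LinearMap.compAlternatingMap_smul]

theorem wedgeForm_smul_right {p q : ℕ} (a : ℝ) (α : V [⋀^Fin p]→ₗ[ℝ] ℝ)
    (β : V [⋀^Fin q]→ₗ[ℝ] ℝ) : wedgeForm α (a • β) = a • wedgeForm α β := by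
  simp only [wedgeForm, ← AlternatingMap.domCoprod'_apply, TensorProduct.tmul_smul, map_smul,
    AlternatingMap.domDomCongr_smul, LinearMap.compAlternatingMap_smul]

noncomputable def concatMul {p q : ℕ} (f : MultilinearMap ℝ (fun _ : Fin p => V) ℝ)
    (g : MultilinearMap ℝ (fun _ : Fin q => V) ℝ) :
    MultilinearMap ℝ (fun _ : Fin (p + q) => V) ℝ :=
  (TensorProduct.lid ℝ ℝ).toLinearMap.compMultilinearMap
    ((f.domCoprod g).domDomCongr finSumFinEquiv)

theorem concatMul_apply {p q : ℕ} (f : MultilinearMap ℝ (fun _ : Fin p => V) ℝ)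
    (g : MultilinearMap ℝ (fun _ : Fin q => V) ℝ) (v : Fin (p + q) → V) :
    concatMul f g v = f (fun i => v (Fin.castAdd q i)) * g (fun j => v (Fin.natAdd p j)) := by
  simp [concatMul, MultilinearMap.domCoprod, MultilinearMap.domDomCongr]

theorem alternatization_concatMul {p q : ℕ} (f : MultilinearMap ℝ (fun _ : Fin p => V) ℝ)
    (g : MultilinearMap ℝ (fun _ : Fin q => V) ℝ) :
    (concatMul f g).alternatization = wedgeForm f.alternatization g.alternatization := by
  rw [concatMul, wedgeForm, LinearMap.compMultilinearMap_alternatization,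
    MultilinearMap.alternatization_domDomCongr, MultilinearMap.domCoprod_alternization]

theorem wedgeForm_oneForm_apply (ξ η : V →ₗ[ℝ] ℝ) (v w : V) :
    wedgeForm (oneForm ξ) (oneForm η) ![v, w] = ξ v * η w - ξ w * η v := by
  have h_alt : ∀ ζ : V →ₗ[ℝ] ℝ, (oneForm ζ : MultilinearMap ℝ _ ℝ).alternatization = oneForm ζ :=
    fun ζ => by simp [AlternatingMap.coe_alternatization]
  rw [← h_alt ξ, ← h_alt η, ← alternatization_concatMul, MultilinearMap.alternatization_apply,
    show (Finset.univ : Finset (Perm (Fin 2))) = {1, swap 0 1} by decide,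
    Finset.sum_pair (by decide)]
  simp only [MultilinearMap.domDomCongr_apply, concatMul_apply]
  simp [oneForm, sub_eq_add_neg]

def finPairEquiv (k : ℕ) : Fin k × Bool ≃ Fin (2 * k) :=
  ((Equiv.refl _).prodCongr finTwoEquiv.symm).trans
    (finProdFinEquiv.trans (finCongr (mul_comm k 2)))

@[simp] theorem finPairEquiv_apply_val (k : ℕ) (i : Fin k) (b : Bool) :
    (finPairEquiv k (i, b) : ℕ) = 2 * i + b.toNat := by
  cases b <;> simp [finPairEquiv, finTwoEquiv, mul_comm, add_comm]

noncomputable def pairProd (ω : MultilinearMap ℝ (fun _ : Fin 2 => V) ℝ) :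
    (k : ℕ) → MultilinearMap ℝ (fun _ : Fin (2 * k) => V) ℝ
  | 0 => (MultilinearMap.constOfIsEmpty ℝ (fun _ : Fin 0 => V) 1).domDomCongr
      (finCongr (by omega : (0 : ℕ) = 2 * 0))
  | (k + 1) => (concatMul ω (pairProd ω k)).domDomCongr
      (finCongr (by omega : 2 + 2 * k = 2 * (k + 1)))

theorem pairProd_apply (ω : MultilinearMap ℝ (fun _ : Fin 2 => V) ℝ) (k : ℕ)
    (v : Fin k × Bool → V) :
    pairProd ω k (v ∘ (finPairEquiv k).symm) = ∏ i, ω ![v (i, false), v (i, true)] := by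
  induction k with
  | zero => simp [pairProd]
  | succ k ih =>
    rw [pairProd, MultilinearMap.domDomCongr_apply, concatMul_apply, Fin.prod_univ_succ,
      ← ih fun p => v (p.1.succ, p.2)]
    congr 2 <;> funext i
    · fin_cases i <;> exact congrArg v ((Equiv.symm_apply_eq _).2 (Fin.ext (by simp)))
    · obtain ⟨⟨j, b⟩, rfl⟩ := (finPairEquiv k).surjective i
      exact congrArg v ((Equiv.symm_apply_eq _).2 (Fin.ext (by simp; ring)))

theorem concatMul_pairProd_apply (ω f : MultilinearMap ℝ (fun _ : Fin 2 => V) ℝ) (N : ℕ)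
    (v : Fin (N + 1) × Bool → V) :
    (concatMul (pairProd ω N) f).domDomCongr (finCongr (by omega : 2 * N + 2 = 2 * (N + 1)))
        (v ∘ (finPairEquiv (N + 1)).symm)
      = (∏ i : Fin N, ω ![v (i.castSucc, false), v (i.castSucc, true)]) *
          f ![v (Fin.last N, false), v (Fin.last N, true)] := by
  rw [MultilinearMap.domDomCongr_apply, concatMul_apply,
    ← pairProd_apply ω N fun p => v (p.1.castSucc, p.2)]
  congr 2
  funext i
  fin_cases i <;> exact congrArg v ((Equiv.symm_apply_eq _).2 (Fin.ext (by simp)))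

theorem wpow_eq_smul_alternatization (Ω : V [⋀^Fin 2]→ₗ[ℝ] ℝ) (k : ℕ) :
    wpow Ω k = ((2 : ℝ) ^ k)⁻¹ • (pairProd Ω k).alternatization := by
  induction k with
  | zero =>
    ext v
    simp [wpow, pairProd, MultilinearMap.alternatization_apply]
  | succ k ih =>
    rw [wpow, ih, pairProd, MultilinearMap.alternatization_domDomCongr,
      alternatization_concatMul, AlternatingMap.coe_alternatization_fin_two, wedgeForm_smul_left,
      wedgeForm_smul_right, AlternatingMap.domDomCongr_smul, AlternatingMap.domDomCongr_smul,
      smul_smul]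
    congr 1
    field_simp
    ring

end WedgeProducts

section Counting

open Fintype

variable {α : Type*} [Fintype α] [DecidableEq α]

theorem Fintype.sum_comp_eval {β M : Type*} [Fintype β] [AddCommMonoid M] (a : α) (F : β → M) :
    ∑ c : α → β, F (c a) = card β ^ (card α - 1) • ∑ b, F b := by
  rw [Fintype.sum_equiv (funSplitAt a β) (fun c => F (c a)) (fun p => F p.1) fun _ => rfl,
    Fintype.sum_prod_type, Finset.sum_comm]
  simp [Finset.smul_sum, Fintype.card_subtype_compl]

theorem Equiv.Perm.sum_comp_apply (a : α) (G : α → ℝ) :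
    ∑ π : Perm α, G (π a) = (card α - 1)! * ∑ j, G j := by
  -- the sum does not depend on `a`, so summing it over all `a` gives `card α` times it
  have h_indep : ∀ b, ∑ π : Perm α, G (π b) = ∑ π : Perm α, G (π a) := fun b =>
    Fintype.sum_equiv (Equiv.mulRight (swap a b)) _ _ fun π => by simp
  have h_total : (card α : ℝ) * ∑ π : Perm α, G (π a) = (card α)! * ∑ j, G j := by
    calc (card α : ℝ) * ∑ π : Perm α, G (π a) = ∑ b, ∑ π : Perm α, G (π b) := by
          simp [h_indep]
      _ = ∑ π : Perm α, ∑ b, G (π b) := Finset.sum_comm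
      _ = (card α)! * ∑ j, G j := by simp [Equiv.sum_comp, Fintype.card_perm]
  obtain ⟨k, hk⟩ : ∃ k, card α = k + 1 := Nat.exists_eq_add_one.2 (Fintype.card_pos_iff.2 ⟨a⟩)
  rw [hk, Nat.factorial_succ, Nat.cast_mul, mul_assoc] at h_total
  rw [hk, Nat.add_sub_cancel]
  exact mul_left_cancel₀ (by positivity) h_total

end Counting

section BlockPerm

variable {ι : Type*}

def blockPerm (π : Perm ι) (c : ι → Bool) : Perm (ι × Bool) :=
  (prodCongrRight fun i => if c i then swap false true else Equiv.refl Bool).trans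
    (prodCongrLeft fun _ => π)

@[simp] theorem blockPerm_apply (π : Perm ι) (c : ι → Bool) (i : ι) (s : Bool) :
    blockPerm π c (i, s) = (π i, xor (c i) s) := by
  cases s <;> cases h : c i <;> simp [blockPerm, h]

theorem sign_blockPerm [Fintype ι] [DecidableEq ι] (π : Perm ι) (c : ι → Bool) :
    Perm.sign (blockPerm π c) = ∏ i, if c i then -1 else 1 := by
  have h_sq : ∏ _b : Bool, Perm.sign π = 1 := by simp [sq, Int.units_mul_self]
  rw [blockPerm, ← Perm.mul_def, map_mul, Perm.sign_prodCongrLeft, Perm.sign_prodCongrRight,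
    h_sq, one_mul]
  refine Finset.prod_congr rfl fun i _ => ?_
  split_ifs <;> simp

theorem blockPerm_injective :
    Function.Injective fun p : Perm ι × (ι → Bool) => blockPerm p.1 p.2 := by
  rintro ⟨π, c⟩ ⟨π', c'⟩ h
  have h' : ∀ i, (π i, c i) = (π' i, c' i) := fun i => by
    simpa using DFunLike.congr_fun h (i, false)
  exact Prod.ext (Equiv.ext fun i => (Prod.ext_iff.1 (h' i)).1)
    (funext fun i => (Prod.ext_iff.1 (h' i)).2)

theorem Equiv.Perm.snd_eq_not_of_fst_eq (τ : Perm (ι × Bool)) {p q : ι × Bool} (hpq : p ≠ q)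
    (h : (τ p).1 = (τ q).1) : (τ q).2 = !(τ p).2 :=
  Bool.ne_not.1 fun h' => hpq (τ.injective (Prod.ext h (by simpa using h'.symm)))

theorem Equiv.Perm.fst_apply_true_eq_of_forall_ne (τ : Perm (ι × Bool)) (l : ι)
    (h : ∀ i ≠ l, (τ (i, false)).1 = (τ (i, true)).1) :
    (τ (l, false)).1 = (τ (l, true)).1 := by
  by_contra hne
  set a := τ (l, false) with ha
  obtain ⟨⟨j, s⟩, hjs⟩ := τ.surjective (a.1, !a.2)
  have hjl : j ≠ l := by
    rintro rfl
    cases s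
    · rw [← ha] at hjs
      exact absurd (congrArg Prod.snd hjs) (by simp)
    · exact hne (by rw [hjs])
  -- the partner of `(j, s)` in its block is sent to `a` itself
  have h_fst : (τ (j, !s)).1 = a.1 := by
    cases s
    · simpa [hjs] using (h j hjl).symm
    · simpa [hjs] using h j hjl
  have h_snd : (τ (j, !s)).2 = a.2 := by
    simpa [hjs] using τ.snd_eq_not_of_fst_eq (p := (j, s)) (by simp) (by rw [hjs, h_fst])
  exact hjl (congrArg Prod.fst (τ.injective (Prod.ext h_fst h_snd)))

theorem Equiv.Perm.exists_blockPerm_eq [Finite ι] (τ : Perm (ι × Bool))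
    (h : ∀ i, (τ (i, false)).1 = (τ (i, true)).1) : ∃ π c, blockPerm π c = τ := by
  have h_snd : ∀ i, (τ (i, true)).2 = !(τ (i, false)).2 := fun i =>
    τ.snd_eq_not_of_fst_eq (by simp) (h i)
  have h_inj : Function.Injective fun i => (τ (i, false)).1 := by
    intro i j hij
    by_contra hne
    have h_fst : (τ (i, false)).1 = (τ (j, false)).1 := hij
    have h_snd_j := τ.snd_eq_not_of_fst_eq (p := (i, false)) (q := (j, false)) (by simp [hne]) h_fst
    have : τ (j, false) = τ (i, true) :=
      Prod.ext (h_fst.symm.trans (h i)) (h_snd_j.trans (h_snd i).symm)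
    simpa using τ.injective this
  refine ⟨Equiv.ofBijective _ (Finite.injective_iff_bijective.1 h_inj),
    fun i => (τ (i, false)).2, Equiv.ext fun ⟨i, s⟩ => ?_⟩
  cases s
  · simp
  · exact Prod.ext (by simp [h]) (by simp [h_snd])

theorem sum_perm_eq_sum_blockPerm [Fintype ι] [DecidableEq ι] (t : Perm (ι × Bool) → ℝ) (l : ι)
    (ht : ∀ τ : Perm (ι × Bool), ∀ i ≠ l, (τ (i, false)).1 ≠ (τ (i, true)).1 → t τ = 0) :
    ∑ τ, t τ = ∑ π, ∑ c, t (blockPerm π c) := by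
  rw [← Fintype.sum_prod_type', ← Finset.sum_image fun p _ q _ h => blockPerm_injective h]
  refine (Finset.sum_subset (Finset.subset_univ _) fun τ _ hτ => ?_).symm
  by_contra hne
  have h_rows : ∀ i ≠ l, (τ (i, false)).1 = (τ (i, true)).1 := fun i hi => by
    by_contra h
    exact hne (ht τ i hi h)
  obtain ⟨π, c, rfl⟩ := τ.exists_blockPerm_eq fun i => by
    by_cases hi : i = l
    · exact hi ▸ τ.fst_apply_true_eq_of_forall_ne l h_rows
    · exact h_rows i hi
  exact hτ (Finset.mem_image_of_mem _ (Finset.mem_univ (π, c)))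

end BlockPerm

/-- Only permutations mapping blocks to blocks contribute, because `B` vanishes off the diagonal
blocks; on those the signs of the permutation and of the `B`-values cancel. -/
theorem sum_sign_mul_prod_pairing {N : ℕ} (B C : Fin (N + 1) × Bool → Fin (N + 1) × Bool → ℝ)
    (hB_off : ∀ p q, p.1 ≠ q.1 → B p q = 0)
    (hB_pair : ∀ j b, B (j, b) (j, !b) = if b then -1 else 1) :
    ∑ τ : Perm (Fin (N + 1) × Bool), (Perm.sign τ : ℝ) *
        ((∏ i : Fin N, B (τ (i.castSucc, false)) (τ (i.castSucc, true))) *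
          C (τ (Fin.last N, false)) (τ (Fin.last N, true)))
      = 2 ^ N * N ! * ∑ j, (C (j, false) (j, true) - C (j, true) (j, false)) := by
  let ε : Bool → ℝ := fun b => if b then -1 else 1
  let G : Fin (N + 1) → Bool → ℝ := fun j b => ε b * C (j, b) (j, !b)
  have h_block : ∀ (π : Perm (Fin (N + 1))) (c : Fin (N + 1) → Bool),
      (Perm.sign (blockPerm π c) : ℝ) *
          ((∏ i : Fin N, B (blockPerm π c (i.castSucc, false)) (blockPerm π c (i.castSucc, true)))
            * C (blockPerm π c (Fin.last N, false)) (blockPerm π c (Fin.last N, true)))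
        = G (π (Fin.last N)) (c (Fin.last N)) := by
    intro π c
    have h_sign : (Perm.sign (blockPerm π c) : ℝ) = ∏ i, ε (c i) := by
      rw [sign_blockPerm]
      push_cast
      exact Finset.prod_congr rfl fun i _ => by cases c i <;> simp [ε]
    have h_sq : (∏ i : Fin N, ε (c i.castSucc)) * ∏ i : Fin N, ε (c i.castSucc) = 1 := by
      rw [← Finset.prod_mul_distrib]
      exact Finset.prod_eq_one fun i _ => by cases c i.castSucc <;> simp [ε]
    simp only [h_sign, blockPerm_apply, Bool.xor_false, Bool.xor_true, hB_pair,
      Fin.prod_univ_castSucc]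
    linear_combination G (π (Fin.last N)) (c (Fin.last N)) * h_sq
  have h_sum_c : ∀ π : Perm (Fin (N + 1)),
      ∑ c : Fin (N + 1) → Bool, G (π (Fin.last N)) (c (Fin.last N))
        = 2 ^ N * ∑ b, G (π (Fin.last N)) b := fun π => by
    rw [Fintype.sum_comp_eval, nsmul_eq_mul]
    simp
  have h_sum_π := Perm.sum_comp_apply (Fin.last N) fun j => ∑ b, G j b
  rw [sum_perm_eq_sum_blockPerm _ (Fin.last N) fun τ i hi hne => ?_]
  · simp only [h_block, h_sum_c, ← Finset.mul_sum, h_sum_π]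
    simp [G, ε, mul_assoc, sub_eq_neg_add]
  · obtain ⟨i, rfl⟩ := Fin.exists_castSucc_eq.2 hi
    rw [Finset.prod_eq_zero (Finset.mem_univ i) (hB_off _ _ hne), zero_mul, mul_zero]

section SymplecticFrame

variable {V : Type} [AddCommGroup V] [Module ℝ V]

structure IsSymplecticFrame {ι : Type*} (Ω : V [⋀^Fin 2]→ₗ[ℝ] ℝ) (U : ι × Bool → V) : Prop where
  apply_of_fst_ne : ∀ p q, p.1 ≠ q.1 → Ω ![U p, U q] = 0
  apply_pair : ∀ i, Ω ![U (i, false), U (i, true)] = 1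

theorem IsSymplecticFrame.apply_pair_not {ι : Type*} {Ω : V [⋀^Fin 2]→ₗ[ℝ] ℝ} {U : ι × Bool → V}
    (hU : IsSymplecticFrame Ω U) (i : ι) (b : Bool) :
    Ω ![U (i, b), U (i, !b)] = if b then -1 else 1 := by
  cases b
  · simp [hU.apply_pair]
  · simp only [Bool.not_true, if_true]
    rw [Ω.map_vecCons_swap, hU.apply_pair]

theorem wpow_apply_of_isSymplecticFrame {Ω : V [⋀^Fin 2]→ₗ[ℝ] ℝ} {N : ℕ}
    {U : Fin (N + 1) × Bool → V} (hU : IsSymplecticFrame Ω U) :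
    wpow Ω (N + 1) (U ∘ (finPairEquiv (N + 1)).symm) = (N + 1)! := by
  have h_diff : ∀ j, Ω ![U (j, false), U (j, true)] - Ω ![U (j, true), U (j, false)] = 2 :=
    fun j => by rw [Ω.map_vecCons_swap (U (j, false)), hU.apply_pair]; norm_num
  rw [wpow_eq_smul_alternatization, AlternatingMap.smul_apply,
    MultilinearMap.alternatization_apply_comp_symm]
  simp only [pairProd_apply, Function.comp_apply, Fin.prod_univ_castSucc,
    AlternatingMap.coe_multilinearMap]
  rw [sum_sign_mul_prod_pairing (fun p q => Ω ![U p, U q]) (fun p q => Ω ![U p, U q])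
    hU.apply_of_fst_ne hU.apply_pair_not]
  simp only [h_diff, Finset.sum_const, Finset.card_univ, Fintype.card_fin, nsmul_eq_mul,
    smul_eq_mul, Nat.factorial_succ]
  push_cast
  field_simp
  ring

theorem wedgeForm_wpow_apply_of_isSymplecticFrame {Ω : V [⋀^Fin 2]→ₗ[ℝ] ℝ} {N : ℕ}
    {U : Fin (N + 1) × Bool → V} (hU : IsSymplecticFrame Ω U) (β : V [⋀^Fin 2]→ₗ[ℝ] ℝ) :
    (wedgeForm (wpow Ω N) β).domDomCongr (finCongr (by omega : 2 * N + 2 = 2 * (N + 1)))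
        (U ∘ (finPairEquiv (N + 1)).symm)
      = N ! * ∑ j, β ![U (j, false), U (j, true)] := by
  have h_wedge : wedgeForm (wpow Ω N) β
      = ((2 : ℝ) ^ (N + 1))⁻¹ • (concatMul (pairProd Ω N) β).alternatization := by
    rw [alternatization_concatMul, AlternatingMap.coe_alternatization_fin_two,
      wpow_eq_smul_alternatization, wedgeForm_smul_left, wedgeForm_smul_right, smul_smul]
    congr 1
    field_simp
    ring
  have h_diff : ∀ j, β ![U (j, false), U (j, true)] - β ![U (j, true), U (j, false)]
      = 2 * β ![U (j, false), U (j, true)] :=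
    fun j => by rw [β.map_vecCons_swap (U (j, false))]; ring
  rw [h_wedge, AlternatingMap.domDomCongr_smul, AlternatingMap.smul_apply,
    ← MultilinearMap.alternatization_domDomCongr, MultilinearMap.alternatization_apply_comp_symm]
  simp only [concatMul_pairProd_apply, Function.comp_apply, AlternatingMap.coe_multilinearMap]
  rw [sum_sign_mul_prod_pairing (fun p q => Ω ![U p, U q]) (fun p q => β ![U p, U q])
    hU.apply_of_fst_ne hU.apply_pair_not]
  simp only [h_diff, ← Finset.mul_sum, smul_eq_mul]
  field_simp
  ring

end SymplecticFrame

section KahlerMetric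

variable {V : Type} [AddCommGroup V] [Module ℝ V]

noncomputable def kahlerMetric (Ω : V [⋀^Fin 2]→ₗ[ℝ] ℝ) (J : V →ₗ[ℝ] V) :
    LinearMap.BilinForm ℝ V :=
  LinearMap.mk₂ ℝ (fun v w => Ω ![v, J w])
    (fun _ _ _ => Ω.map_vecCons_add _ _ _) (fun _ _ _ => Ω.map_vecCons_smul _ _ _)
    (fun v _ _ => by simpa using (Ω.curryLeft v).map_vecCons_add ![] _ _)
    (fun _ v _ => by simpa using (Ω.curryLeft v).map_vecCons_smul ![] _ _)

@[simp] theorem kahlerMetric_apply (Ω : V [⋀^Fin 2]→ₗ[ℝ] ℝ) (J : V →ₗ[ℝ] V) (v w : V) :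
    kahlerMetric Ω J v w = Ω ![v, J w] := rfl

variable {Ω : V [⋀^Fin 2]→ₗ[ℝ] ℝ} {J : V →ₗ[ℝ] V}

theorem LinearMap.apply_apply_of_comp_eq_neg_id (hJ : J ∘ₗ J = -LinearMap.id) (v : V) :
    J (J v) = -v := by
  simpa using LinearMap.congr_fun hJ v

theorem kahlerMetric_apply_J_left (hJ : J ∘ₗ J = -LinearMap.id)
    (hcompat : ∀ v w : V, Ω ![J v, J w] = Ω ![v, w]) (v w : V) :
    kahlerMetric Ω J (J v) w = -kahlerMetric Ω J v (J w) := by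
  rw [← LinearMap.map_neg, kahlerMetric_apply, kahlerMetric_apply, map_neg,
    LinearMap.apply_apply_of_comp_eq_neg_id hJ, neg_neg, hcompat]

theorem kahlerMetric_comm (hJ : J ∘ₗ J = -LinearMap.id)
    (hcompat : ∀ v w : V, Ω ![J v, J w] = Ω ![v, w]) (v w : V) :
    kahlerMetric Ω J v w = kahlerMetric Ω J w v := by
  rw [kahlerMetric_apply Ω J w, Ω.map_vecCons_swap, ← hcompat,
    LinearMap.apply_apply_of_comp_eq_neg_id hJ, ← kahlerMetric_apply, LinearMap.map_neg₂, neg_neg]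

theorem isSymplecticFrame_of_orthonormal {ι : Type*} [DecidableEq ι]
    (hJ : J ∘ₗ J = -LinearMap.id) (b : ι × Bool → V) (hbJ : ∀ i, b (i, true) = J (b (i, false)))
    (hb : ∀ p q, kahlerMetric Ω J (b p) (b q) = if p = q then 1 else 0) :
    IsSymplecticFrame Ω b where
  apply_of_fst_ne := by
    rintro p ⟨j, _ | _⟩ hpq
    · have h : b (j, false) = J (-b (j, true)) := by
        rw [map_neg, hbJ, LinearMap.apply_apply_of_comp_eq_neg_id hJ, neg_neg]
      rw [h, ← kahlerMetric_apply, map_neg, hb, if_neg (by rintro rfl; exact hpq rfl), neg_zero]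
    · rw [hbJ, ← kahlerMetric_apply, hb, if_neg (by rintro rfl; exact hpq rfl)]
  apply_pair i := by simpa [hbJ] using hb (i, false) (i, false)

end KahlerMetric

theorem LinearMap.BilinForm.apply_self_eq_sum_sq {V ι : Type*} [AddCommGroup V] [Module ℝ V]
    [Fintype ι] [DecidableEq ι] (g : LinearMap.BilinForm ℝ V) (b : Basis ι ℝ V)
    (hb : ∀ p q, g (b p) (b q) = if p = q then 1 else 0) (z : V) :
    g z z = ∑ p, g z (b p) ^ 2 := by
  have h_coord : ∀ q, g z (b q) = b.repr z q := fun q => by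
    conv_lhs => rw [← b.sum_repr z]
    simp only [map_sum, map_smul, LinearMap.sum_apply, LinearMap.smul_apply, hb, smul_eq_mul,
      mul_ite, mul_one, mul_zero, Finset.sum_ite_eq', Finset.mem_univ, if_true]
  conv_lhs => enter [2]; rw [← b.sum_repr z]
  simp only [map_sum, map_smul, smul_eq_mul, h_coord, sq]

section ComplexStructure

variable {V : Type} [AddCommGroup V] [Module ℝ V]

noncomputable abbrev complexModule (J : V →ₗ[ℝ] V) (hJ : J ∘ₗ J = -LinearMap.id) : Module ℂ V :=
  Module.compHom V (Complex.lift ⟨J, hJ⟩).toRingHom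

theorem complexModule_smul (J : V →ₗ[ℝ] V) (hJ : J ∘ₗ J = -LinearMap.id) (z : ℂ) (v : V) :
    letI := complexModule J hJ
    z • v = z.re • v + z.im • J v := by
  show Complex.lift ⟨J, hJ⟩ z v = _
  simp [Complex.liftAux_apply]

theorem isScalarTower_complexModule (J : V →ₗ[ℝ] V) (hJ : J ∘ₗ J = -LinearMap.id) :
    letI := complexModule J hJ
    IsScalarTower ℝ ℂ V := by
  let _ := complexModule J hJ
  exact ⟨fun r z v => by
    simp only [complexModule_smul, Complex.smul_re, Complex.smul_im, smul_eq_mul, mul_smul,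
      smul_add]⟩

noncomputable abbrev kahlerInnerCore (J : V →ₗ[ℝ] V) (hJ : J ∘ₗ J = -LinearMap.id)
    (Ω : V [⋀^Fin 2]→ₗ[ℝ] ℝ) (hcompat : ∀ v w : V, Ω ![J v, J w] = Ω ![v, w])
    (hpos : ∀ v : V, v ≠ 0 → 0 < Ω ![v, J v]) :
    @InnerProductSpace.Core ℂ V _ _ (complexModule J hJ) :=
  letI := complexModule J hJ
  { inner := fun v w => ⟨kahlerMetric Ω J v w, kahlerMetric Ω J (J v) w⟩
    conj_inner_symm := fun v w => by
      apply Complex.ext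
      · simp [kahlerMetric_comm hJ hcompat w v]
      · simp [kahlerMetric_apply_J_left hJ hcompat w, kahlerMetric_comm hJ hcompat w]
    re_inner_nonneg := fun v => by
      rcases eq_or_ne v 0 with rfl | hv
      · simp
      · exact (hpos v hv).le
    add_left := fun u v w => by
      apply Complex.ext <;> simp
    smul_left := fun v w z => by
      apply Complex.ext
      · simp [complexModule_smul, kahlerMetric_apply_J_left hJ hcompat, sub_eq_add_neg]
      · simp [complexModule_smul, kahlerMetric_apply_J_left hJ hcompat,
          LinearMap.apply_apply_of_comp_eq_neg_id hJ]
    definite := fun v hv => by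
      by_contra h
      exact (hpos v h).ne' (congrArg Complex.re hv) }

theorem exists_unitary_basis [FiniteDimensional ℝ V] {m : ℕ} (hdim : finrank ℝ V = 2 * m)
    (J : V →ₗ[ℝ] V) (hJ : J ∘ₗ J = -LinearMap.id)
    (Ω : V [⋀^Fin 2]→ₗ[ℝ] ℝ) (hcompat : ∀ v w : V, Ω ![J v, J w] = Ω ![v, w])
    (hpos : ∀ v : V, v ≠ 0 → 0 < Ω ![v, J v]) :
    ∃ b : Basis (Fin m × Bool) ℝ V, (∀ i, b (i, true) = J (b (i, false))) ∧
      ∀ p q, kahlerMetric Ω J (b p) (b q) = if p = q then 1 else 0 := by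
  let _ := complexModule J hJ
  have _ := isScalarTower_complexModule J hJ
  let core := kahlerInnerCore J hJ Ω hcompat hpos
  let _ := core.toNormedAddCommGroup
  let _ := InnerProductSpace.ofCore core.toCore
  have _ : FiniteDimensional ℂ V := Module.Finite.of_restrictScalars_finite ℝ ℂ V
  have hrank : finrank ℂ V = m := by
    have := finrank_mul_finrank ℝ ℂ V
    rw [Complex.finrank_real_complex, hdim] at this
    omega
  let c := (stdOrthonormalBasis ℂ V).reindex (finCongr hrank)
  let b := (Complex.basisOneI.smulTower c.toBasis).reindex
    ((Equiv.prodComm _ _).trans ((Equiv.refl _).prodCongr finTwoEquiv))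
  have hb : ∀ i s, b (i, s) = (if s then Complex.I else 1) • c i := by
    intro i s
    cases s <;> simp [b, finTwoEquiv]
  refine ⟨b, fun i => ?_, fun ⟨i, s⟩ ⟨j, t⟩ => ?_⟩
  · simp [hb, complexModule_smul]
  · -- `g` is the real part of the hermitian inner product
    show (inner ℂ (b (i, s)) (b (j, t))).re = _
    simp only [hb, inner_smul_left, inner_smul_right, c.inner_eq_ite]
    by_cases hij : i = j <;> cases s <;> cases t <;> simp [hij]

end ComplexStructure

/-- If `(V, J, Ω)` is a `2m`-dimensional linear almost-Kähler structure
(`J² = -1`, `Ω` a `J`-invariant alternating 2-form such that `g(v,w) := Ω(v, Jw)` is positive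
definite), then for every covector `ξ` with Riesz representative `z` (i.e. `ξ(v) = g(z,v)`),
one has `(Ω^{m-1}/(m-1)!) ∧ ξ ∧ Jξ = |ξ|_g² · Ω^m/m!`, where `Jξ(v) = -ξ(Jv)` and
`|ξ|_g² = g(z,z)`. -/
theorem wedge_power_covector_identity {m : ℕ} (hm : 1 ≤ m) {V : Type}
    [AddCommGroup V] [Module ℝ V] [FiniteDimensional ℝ V]
    (hdim : finrank ℝ V = 2 * m)
    (J : V →ₗ[ℝ] V) (hJ : J ∘ₗ J = -LinearMap.id)
    (Ω : V [⋀^Fin 2]→ₗ[ℝ] ℝ)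
    (hcompat : ∀ v w : V, Ω ![J v, J w] = Ω ![v, w])
    (hpos : ∀ v : V, v ≠ 0 → 0 < Ω ![v, J v])
    (ξ : V →ₗ[ℝ] ℝ) (z : V) (hz : ∀ v : V, ξ v = Ω ![z, J v]) :
    (((m - 1).factorial : ℝ))⁻¹ •
        ((wedgeForm (wpow Ω (m - 1)) (wedgeForm (oneForm ξ) (oneForm (-(ξ ∘ₗ J))))).domDomCongr
          (finCongr (by omega : 2 * (m - 1) + (1 + 1) = 2 * m)))
      = (Ω ![z, J z] * ((m.factorial : ℝ))⁻¹) • wpow Ω m := by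
  obtain ⟨n, rfl⟩ : ∃ n, m = n + 1 := ⟨m - 1, by omega⟩
  let β : V [⋀^Fin 2]→ₗ[ℝ] ℝ := wedgeForm (oneForm ξ) (oneForm (-(ξ ∘ₗ J)))
  show (n ! : ℝ)⁻¹ • (wedgeForm (wpow Ω n) β).domDomCongr
      (finCongr (by omega : 2 * n + 2 = 2 * (n + 1)))
    = (Ω ![z, J z] * ((n + 1)! : ℝ)⁻¹) • wpow Ω (n + 1)
  obtain ⟨b, hbJ, hb⟩ := exists_unitary_basis hdim J hJ Ω hcompat hpos
  have hb_frame := isSymplecticFrame_of_orthonormal hJ b hbJ hb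
  have h_norm : ∑ j, β ![b (j, false), b (j, true)] = Ω ![z, J z] := by
    rw [← kahlerMetric_apply, (kahlerMetric Ω J).apply_self_eq_sum_sq b hb, Fintype.sum_prod_type]
    refine Finset.sum_congr rfl fun j _ => ?_
    simp [β, wedgeForm_oneForm_apply, hbJ, LinearMap.apply_apply_of_comp_eq_neg_id hJ, ← hz]
    ring
  rw [← sub_eq_zero, ← AlternatingMap.map_basis_eq_zero_iff (b.reindex (finPairEquiv (n + 1))),
    AlternatingMap.sub_apply, sub_eq_zero, Basis.coe_reindex, AlternatingMap.smul_apply,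
    AlternatingMap.smul_apply, wedgeForm_wpow_apply_of_isSymplecticFrame hb_frame β,
    wpow_apply_of_isSymplecticFrame hb_frame, smul_eq_mul, smul_eq_mul, h_norm]
  field_simp
end

section
/- (Pointwise Wirtinger gap estimate) Let ξ = v₁ ∧ v₂ be a unit simple 2-vector in ℝ^{2m} (v₁, v₂ orthonormal for the standard inner product), and let Ω₀ be the standard symplectic form with compatible complex structure J₀. If ⟨Ω₀, ξ⟩ ≥ 1 - ε for some ε ∈ [0,1], then there exists a J₀-invariant unit simple 2-vector ξ₀ (of the form e ∧ J₀e with |e|=1) such that |ξ - ξ₀|² ≤ 2ε. -/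
/-- The real inner product on `ℂ^m`: `⟨a, b⟩_ℝ = Re ⟪a, b⟫_ℂ`. -/
noncomputable def rinner {m : ℕ} (a b : EuclideanSpace ℂ (Fin m)) : ℝ :=
  ((inner ℂ a b : ℂ)).re

/-- The induced inner product of the simple 2-vectors `a ∧ b` and `c ∧ d`:
`⟨a∧b, c∧d⟩ = ⟨a,c⟩⟨b,d⟩ − ⟨a,d⟩⟨b,c⟩`. -/
noncomputable def inner2 {m : ℕ} (a b c d : EuclideanSpace ℂ (Fin m)) : ℝ :=
  rinner a c * rinner b d - rinner a d * rinner b c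

/-- The squared distance `|a∧b − c∧d|²` of two simple 2-vectors. -/
noncomputable def dist2sq {m : ℕ} (a b c d : EuclideanSpace ℂ (Fin m)) : ℝ :=
  inner2 a b a b + inner2 c d c d - 2 * inner2 a b c d

/-!
Take `e = v₁`. Both `v₁ ∧ v₂` and `v₁ ∧ J₀v₁` are unit 2-vectors, and their inner product is
`⟨J₀v₁, v₂⟩ = ⟨Ω₀, ξ⟩`, so `|ξ − v₁ ∧ J₀v₁|² = 2(1 − ⟨Ω₀, ξ⟩) ≤ 2ε`.
-/

open Complex

section
variable {m : ℕ}

lemma rinner_comm (a b : EuclideanSpace ℂ (Fin m)) : rinner a b = rinner b a := by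
  rw [rinner, rinner, ← inner_conj_symm, conj_re]

lemma rinner_self (a : EuclideanSpace ℂ (Fin m)) : rinner a a = ‖a‖ ^ 2 := by
  rw [rinner, inner_self_eq_norm_sq_to_K]
  norm_cast

lemma rinner_I_smul_left (a b : EuclideanSpace ℂ (Fin m)) :
    rinner (I • a) b = (inner ℂ a b : ℂ).im := by
  simp [rinner]

lemma rinner_I_smul_self (a : EuclideanSpace ℂ (Fin m)) : rinner (I • a) a = 0 := by
  rw [rinner_I_smul_left, inner_self_eq_norm_sq_to_K]
  norm_cast

lemma norm_I_smul (a : EuclideanSpace ℂ (Fin m)) : ‖I • a‖ = ‖a‖ := by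
  rw [norm_smul, norm_I, one_mul]

lemma inner2_self (a b : EuclideanSpace ℂ (Fin m)) :
    inner2 a b a b = ‖a‖ ^ 2 * ‖b‖ ^ 2 - rinner a b ^ 2 := by
  rw [inner2, rinner_self, rinner_self, rinner_comm b a]
  ring

lemma inner2_left_I_smul (a b : EuclideanSpace ℂ (Fin m)) :
    inner2 a b a (I • a) = ‖a‖ ^ 2 * rinner (I • a) b := by
  rw [inner2, rinner_self, rinner_comm a (I • a), rinner_I_smul_self, rinner_comm b]
  ring

lemma dist2sq_left_I_smul {a b : EuclideanSpace ℂ (Fin m)} (ha : ‖a‖ = 1) (hb : ‖b‖ = 1)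
    (hab : rinner a b = 0) : dist2sq a b a (I • a) = 2 * (1 - rinner (I • a) b) := by
  rw [dist2sq, inner2_self, inner2_self, inner2_left_I_smul, norm_I_smul,
    rinner_comm a (I • a), rinner_I_smul_self, ha, hb, hab]
  ring

end

theorem wirtinger_gap_general (m : ℕ) (v₁ v₂ : EuclideanSpace ℂ (Fin m))
    (h₁ : ‖v₁‖ = 1) (h₂ : ‖v₂‖ = 1) (h₁₂ : rinner v₁ v₂ = 0)
    (ε : ℝ)
    (h : 1 - ε ≤ rinner (Complex.I • v₁) v₂) :
    ∃ e : EuclideanSpace ℂ (Fin m), ‖e‖ = 1 ∧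
      dist2sq v₁ v₂ e (Complex.I • e) ≤ 2 * ε := by
  refine ⟨v₁, h₁, ?_⟩
  rw [dist2sq_left_I_smul h₁ h₂ h₁₂]
  linarith

/-- pointwise Wirtinger gap estimate: if `ξ = v₁ ∧ v₂` is a unit simple
2-vector in `ℝ^{2m} ≅ ℂ^m` with `⟨Ω₀, ξ⟩ = Ω₀(v₁, v₂) = ⟨J₀v₁, v₂⟩ ≥ 1 − ε` for some
`ε ∈ [0,1]`, then there is a `J₀`-invariant unit simple 2-vector `ξ₀ = e ∧ J₀e` (`‖e‖ = 1`)
with `|ξ − ξ₀|² ≤ 2ε`. -/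
theorem wirtinger_gap (m : ℕ) (v₁ v₂ : EuclideanSpace ℂ (Fin m))
    (h₁ : ‖v₁‖ = 1) (h₂ : ‖v₂‖ = 1) (h₁₂ : rinner v₁ v₂ = 0)
    (ε : ℝ) (hε0 : 0 ≤ ε) (hε1 : ε ≤ 1)
    (h : 1 - ε ≤ rinner (Complex.I • v₁) v₂) :
    ∃ e : EuclideanSpace ℂ (Fin m), ‖e‖ = 1 ∧
      dist2sq v₁ v₂ e (Complex.I • e) ≤ 2 * ε :=
  wirtinger_gap_general m v₁ v₂ h₁ h₂ h₁₂ ε h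
end

section
/- (Uniqueness of weak limits via vanishing residual mass) Let T be a (2m-2)-current on B, and suppose T = T_j + R_j for each j ∈ ℕ where: each T_j has a unique tangent cone at 0 (i.e. (Φ_ρ)_* T_j converges to a single limit C_j as ρ → 0⁺ along all sequences); and lim_{j→∞} lim sup_{ρ→0⁺} M(R_j ⟍ B_ρ)/ρ^{2m-2} = 0. If (Φ_{ρ_k})_* T ⇀ C_∞ and (Φ_{ρ'_k})_* T ⇀ C'_∞ for sequences ρ_k, ρ'_k → 0⁺, then M(C_∞ - C'_∞) = 0, i.e. T has a unique tangent cone at 0. -/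
open Filter Topology

/-! Blowing up the decomposition `T = T_j + R_j`, the bulk parts `(Φ_ρ)_* T_j` converge to the
same cone `C_j` along both sequences, so `C₁ - C₂` is the weak limit of differences of blown-up
residuals alone. By subadditivity and symmetry of the mass these differences have mass at most
twice the residual ratio, and lower semicontinuity passes that bound to `M (C₁ - C₂)`; letting
`j → ∞` the bound tends to `0`. -/

theorem mass_sub_le_add {V : Type*} [AddGroup V] (M : V → ℝ)
    (hMadd : ∀ v w, M (v + w) ≤ M v + M w) (hMneg : ∀ v, M (-v) = M v) (v w : V) :
    M (v - w) ≤ M v + M w := by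
  simpa only [sub_eq_add_neg, hMneg] using hMadd v (-w)

theorem mass_sub_limits_le {V : Type*} [AddCommGroup V] [TopologicalSpace V]
    [IsTopologicalAddGroup V] (M : V → ℝ)
    (hMadd : ∀ v w, M (v + w) ≤ M v + M w) (hMneg : ∀ v, M (-v) = M v)
    (hMlsc : ∀ (s : ℕ → V) (v : V) (c : ℝ), Tendsto s atTop (𝓝 v) →
      (∀ᶠ n in atTop, M (s n) ≤ c) → M v ≤ c)
    {x y t t' r r' : ℕ → V} {A B C : V} {ε ε' : ℝ}
    (hx : Tendsto x atTop (𝓝 A)) (hy : Tendsto y atTop (𝓝 B))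
    (ht : Tendsto t atTop (𝓝 C)) (ht' : Tendsto t' atTop (𝓝 C))
    (hxs : ∀ k, x k = t k + r k) (hys : ∀ k, y k = t' k + r' k)
    (hr : ∀ᶠ k in atTop, M (r k) ≤ ε) (hr' : ∀ᶠ k in atTop, M (r' k) ≤ ε') :
    M (A - B) ≤ ε + ε' := by
  have hres_eq : ∀ k, r k - r' k = (x k - y k) - (t k - t' k) := fun k => by
    rw [hxs, hys]; abel
  have hlim : Tendsto (fun k => r k - r' k) atTop (𝓝 (A - B)) := by
    simpa only [← hres_eq, sub_self, sub_zero] using (hx.sub hy).sub (ht.sub ht')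
  refine hMlsc _ _ _ hlim ?_
  filter_upwards [hr, hr'] with k hk hk'
  linarith [mass_sub_le_add M hMadd hMneg (r k) (r' k)]

/-- Currents are modelled abstractly: `V` carries the weak topology, `M` is the mass and `Φ ρ` is
the blow-up `(Φ_ρ)_*`, so `M (Φ ρ R)` stands for `M (R ⟍ B_ρ) / ρ ^ (2m - 2)`. -/
theorem unique_tangent_cone_via_residual {V : Type}
    [AddCommGroup V] [TopologicalSpace V] [IsTopologicalAddGroup V]
    (M : V → ℝ) (hM0 : ∀ v, 0 ≤ M v)
    (hMadd : ∀ v w, M (v + w) ≤ M v + M w) (hMneg : ∀ v, M (-v) = M v)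
    (hMlsc : ∀ (s : ℕ → V) (v : V) (c : ℝ), Tendsto s atTop (nhds v) →
      (∀ᶠ n in atTop, M (s n) ≤ c) → M v ≤ c)
    (Φ : ℝ → V →+ V) (T : V) (Tj Rj : ℕ → V)
    (hsplit : ∀ j, T = Tj j + Rj j)
    (huniq : ∀ j, ∃ Cj : V,
      Tendsto (fun ρ => Φ ρ (Tj j)) (nhdsWithin 0 (Set.Ioi 0)) (nhds Cj))
    (hres : ∀ ε : ℝ, 0 < ε → ∃ j : ℕ, ∃ δ : ℝ, 0 < δ ∧
      ∀ ρ : ℝ, 0 < ρ → ρ < δ → M (Φ ρ (Rj j)) ≤ ε)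
    (ρ₁ ρ₂ : ℕ → ℝ) (hρ₁pos : ∀ k, 0 < ρ₁ k) (hρ₂pos : ∀ k, 0 < ρ₂ k)
    (hρ₁ : Tendsto ρ₁ atTop (nhds 0)) (hρ₂ : Tendsto ρ₂ atTop (nhds 0))
    (C₁ C₂ : V)
    (h1 : Tendsto (fun k => Φ (ρ₁ k) T) atTop (nhds C₁))
    (h2 : Tendsto (fun k => Φ (ρ₂ k) T) atTop (nhds C₂)) :
    M (C₁ - C₂) = 0 := by
  refine le_antisymm (le_of_forall_pos_le_add fun ε hε => ?_) (hM0 _)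
  obtain ⟨j, δ, hδ, hRj⟩ := hres (ε / 2) (half_pos hε)
  obtain ⟨Cj, hCj⟩ := huniq j
  have hbulk : ∀ ρ : ℕ → ℝ, (∀ k, 0 < ρ k) → Tendsto ρ atTop (𝓝 0) →
      Tendsto (fun k => Φ (ρ k) (Tj j)) atTop (𝓝 Cj) := fun ρ hpos hρ =>
    hCj.comp (tendsto_nhdsWithin_iff.2 ⟨hρ, .of_forall hpos⟩)
  have hresidual : ∀ ρ : ℕ → ℝ, (∀ k, 0 < ρ k) → Tendsto ρ atTop (𝓝 0) →
      ∀ᶠ k in atTop, M (Φ (ρ k) (Rj j)) ≤ ε / 2 := fun ρ hpos hρ =>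
    (hρ.eventually (gt_mem_nhds hδ)).mono fun k hk => hRj _ (hpos k) hk
  have hsplitΦ : ∀ ρ : ℝ, Φ ρ T = Φ ρ (Tj j) + Φ ρ (Rj j) := fun ρ => by
    rw [hsplit j, map_add]
  have := mass_sub_limits_le M hMadd hMneg hMlsc h1 h2 (hbulk ρ₁ hρ₁pos hρ₁)
    (hbulk ρ₂ hρ₂pos hρ₂) (fun k => hsplitΦ _) (fun k => hsplitΦ _)
    (hresidual ρ₁ hρ₁pos hρ₁) (hresidual ρ₂ hρ₂pos hρ₂)
  linarith
end
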